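/- Let α, β ∈ ℝ with α ≠ 0 and β not an integer. Define the Riccati series coefficients c_k ∈ ℝ by c_0 = 0 and, for k ≥ 1, (k − β)·c_k + β·Σ_{i=1}^{k−1} c_i·c_{k−i} + α·δ_{k,1} = 0 (well defined since β is not a positive integer; in particular c_1 = α/(β−1) ≠ 0 and c_2 = −β c_1²/(2−β)). For n ≥ 2 define α_n = −α²β²/((β−2n+1)(β−2n+2)²(β−2n+3)) and β_n = −2αβ/((β−2n)(β−2n+2)), and define polynomials recursively by A_0 = 0, B_0 = 1, A_1 = c_1·x, B_1 = 1 − (c_2/c_1)·x, A_n = (1+β_n x)·A_{n−1} + α_n x²·A_{n−2}, B_n = (1+β_n x)·B_{n−1} + α_n x²·B_{n−2}. Then for every n ≥ 1 the pair (A_n, B_n) is an [n/n] Padé pair for the series (c_k), i.e. A_n − B_n·C_{2n} has zero coefficients in all degrees 0,…,2n. (These are the paper's explicit Jacobi parameters for the Riccati equation, Algorithm 2.) -/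

import Mathlib

open Polynomial

/-- The truncation `C_N(x) = ∑_{k=0}^{N} c_k x^k` of the series with coefficients `c`. -/
noncomputable def seriesTrunc (c : ℕ → ℝ) (N : ℕ) : Polynomial ℝ :=
  ∑ k ∈ Finset.range (N + 1), Polynomial.C (c k) * Polynomial.X ^ k

/-- `(A, B)` is an `[n/n]` Padé pair for the series with coefficients `c`. -/
def IsPadePair (c : ℕ → ℝ) (n : ℕ) (A B : Polynomial ℝ) : Prop :=
  A.natDegree ≤ n ∧ B.natDegree ≤ n ∧ A.coeff 0 = 0 ∧ B.coeff 0 = 1 ∧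
    ∀ j ≤ 2 * n, (A - B * seriesTrunc c (2 * n)).coeff j = 0

/-- The explicit Jacobi parameter `α_n = -α²β²/((β-2n+1)(β-2n+2)²(β-2n+3))` for the
Riccati series. -/
noncomputable def riccatiαn (α β : ℝ) (n : ℕ) : ℝ :=
  -(α ^ 2 * β ^ 2) /
    ((β - 2 * n + 1) * (β - 2 * n + 2) ^ 2 * (β - 2 * n + 3))

/-- The explicit Jacobi parameter `β_n = -2αβ/((β-2n)(β-2n+2))` for the Riccati series. -/
noncomputable def riccatiβn (α β : ℝ) (n : ℕ) : ℝ :=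
  -(2 * α * β) / ((β - 2 * n) * (β - 2 * n + 2))

/-!
Put `Gₘ = ₀F₁(; m + 1 - β; -αβX)`. The substitution `w = X u' / (β u)` turns the Riccati
equation into `X u'' + (1 - β) u' + αβ u = 0`, which `G₀` solves, and `G₀' = β c₁ G₁`; as the
recursion determines `c` (because `k - β ≠ 0`), the Riccati series is `w = c₁ X G₁ / G₀`.
The contiguous relations `Gₘ = Gₘ₊₁ + aₘ X Gₘ₊₂` expand `w` into the Stieltjes continued
fraction `c₁ X / (1 + a₀ X / (1 + a₁ X / ⋯))`, whose even contraction is the Jacobi fraction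
with `βₙ = a₂ₙ₋₃ + a₂ₙ₋₂` and `αₙ = -a₂ₙ₋₄ a₂ₙ₋₃`. Its convergents satisfy
`(Bₙ w - Aₙ) G₀ = c₁ a₀ ⋯ a₂ₙ₋₁ X^(2n+1) G₂ₙ₊₁`, and `G₀` is a unit, so `Aₙ / Bₙ` agrees with
`w` up to degree `2n`.
-/

theorem add_add_natCast_ne_zero {K : Type*} [AddMonoidWithOne K] {b : K}
    (hb : ∀ n : ℕ, b + n ≠ 0) (m n : ℕ) : b + m + n ≠ 0 := by
  simpa [add_assoc] using hb (m + n)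

theorem one_sub_add_natCast_ne_zero {K : Type*} [Field K] {β : K} (hβ : ∀ k : ℕ, (k : K) ≠ β)
    (n : ℕ) : 1 - β + n ≠ 0 :=
  fun h => hβ (n + 1) (by push_cast; linear_combination h)

namespace PowerSeries

section Hypergeometric

variable {K : Type*} [Field K]

theorem ascPochhammer_eval_ne_zero [CharZero K] {b : K} (hb : ∀ n : ℕ, b + n ≠ 0) (j : ℕ) :
    (ascPochhammer K j).eval b ≠ 0 := by
  rw [Ne, ascPochhammer_eval_eq_zero_iff]
  rintro ⟨k, -, hk⟩
  exact hb k (by rw [hk]; ring)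

theorem ascPochhammer_eval_succ_left {b : K} (j : ℕ) :
    (ascPochhammer K (j + 1)).eval b = b * (ascPochhammer K j).eval (b + 1) := by
  simp [ascPochhammer_succ_left, add_comm]

noncomputable def hypergeometric0F1 (b z : K) : K⟦X⟧ :=
  mk fun j => z ^ j / (j.factorial * (ascPochhammer K j).eval b)

variable [CharZero K] {b : K} (z : K)

theorem constantCoeff_hypergeometric0F1 : constantCoeff (hypergeometric0F1 b z) = 1 := by
  simp [hypergeometric0F1, ← coeff_zero_eq_constantCoeff_apply]

theorem derivative_hypergeometric0F1 (hb : ∀ n : ℕ, b + n ≠ 0) :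
    d⁄dX K (hypergeometric0F1 b z) = C (z / b) * hypergeometric0F1 (b + 1) z := by
  ext j
  have hb1 : ∀ n : ℕ, b + 1 + n ≠ 0 := by exact_mod_cast add_add_natCast_ne_zero hb 1
  have hpoch := ascPochhammer_eval_ne_zero hb1 j
  have hb0 : b ≠ 0 := by simpa using hb 0
  simp only [hypergeometric0F1, coeff_derivative, coeff_C_mul, coeff_mk,
    ascPochhammer_eval_succ_left, Nat.factorial_succ]
  push_cast
  field_simp
  ring

theorem hypergeometric0F1_contiguous (hb : ∀ n : ℕ, b + n ≠ 0) :
    hypergeometric0F1 b z =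
      hypergeometric0F1 (b + 1) z + C (z / (b * (b + 1))) * X * hypergeometric0F1 (b + 2) z := by
  ext (_ | j)
  · simp [hypergeometric0F1]
  have hb1 : ∀ n : ℕ, b + 1 + n ≠ 0 := by exact_mod_cast add_add_natCast_ne_zero hb 1
  have hb2 : ∀ n : ℕ, b + 2 + n ≠ 0 := by exact_mod_cast add_add_natCast_ne_zero hb 2
  have hpoch1 := ascPochhammer_eval_ne_zero hb1 j
  have hpoch2 := ascPochhammer_eval_ne_zero hb2 j
  have hb0 : b ≠ 0 := by simpa using hb 0
  have hb1' : b + 1 ≠ 0 := by simpa using hb 1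
  have hbj := hb1 j
  have hshift : (ascPochhammer K j).eval (b + 1) * (b + 1 + j) =
      (b + 1) * (ascPochhammer K j).eval (b + 2) := by
    rw [← ascPochhammer_succ_eval, ascPochhammer_eval_succ_left, add_assoc, one_add_one_eq_two]
  simp only [hypergeometric0F1, map_add, mul_assoc, coeff_C_mul, coeff_succ_X_mul, coeff_mk,
    ascPochhammer_eval_succ_left, Nat.factorial_succ]
  rw [add_assoc b 1 1, one_add_one_eq_two]
  push_cast at *
  have hfac : (j.factorial : K) ≠ 0 := Nat.cast_ne_zero.2 j.factorial_ne_zero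
  field_simp
  linear_combination (-z ^ (j + 1)) * hshift

theorem hypergeometric0F1_ode (hb : ∀ n : ℕ, b + n ≠ 0) :
    X * d⁄dX K (d⁄dX K (hypergeometric0F1 b z)) + C b * d⁄dX K (hypergeometric0F1 b z)
      - C z * hypergeometric0F1 b z = 0 := by
  have hb1 : ∀ n : ℕ, b + 1 + n ≠ 0 := by exact_mod_cast add_add_natCast_ne_zero hb 1
  have h0 : b ≠ 0 := by simpa using hb 0
  have h1 : b + 1 ≠ 0 := by simpa using hb 1
  rw [derivative_hypergeometric0F1 z hb, Derivation.leibniz, derivative_C, smul_zero, add_zero,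
    smul_eq_mul, derivative_hypergeometric0F1 z hb1, hypergeometric0F1_contiguous z hb,
    add_assoc b 1 1, one_add_one_eq_two]
  have e1 : C b * C (z / b) = C z := by rw [← map_mul, mul_div_cancel₀ _ h0]
  have e2 : C (z / b) * C (z / (b + 1)) = C z * C (z / (b * (b + 1))) := by
    simp only [← map_mul]; congr 1; field_simp
  linear_combination hypergeometric0F1 (b + 1) z * e1 + X * hypergeometric0F1 (b + 2) z * e2

end Hypergeometric

section Riccati

variable {R : Type*} [CommRing R]

noncomputable def riccati (α β : R) (W : R⟦X⟧) : R⟦X⟧ :=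
  X * d⁄dX R W - C β * W + C β * W ^ 2 + C α * X

def RiccatiRecurrence (α β : R) (c : ℕ → R) : Prop :=
  c 0 = 0 ∧ ∀ k : ℕ, 1 ≤ k →
    ((k : R) - β) * c k + β * (∑ i ∈ Finset.Ico 1 k, c i * c (k - i))
      + (if k = 1 then α else 0) = 0

theorem coeff_riccati (α β : R) (W : R⟦X⟧) (k : ℕ) :
    coeff k (riccati α β W) = ((k : R) - β) * coeff k W
      + β * ∑ i ∈ Finset.range (k + 1), coeff i W * coeff (k - i) W
      + if k = 1 then α else 0 := by
  have hXd : coeff k (X * d⁄dX R W) = k * coeff k W := by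
    rcases k with _ | k
    · simp
    · rw [coeff_succ_X_mul, coeff_derivative, mul_comm]; push_cast; ring
  simp only [riccati, map_add, map_sub, coeff_C_mul, hXd]
  rw [sq, coeff_mul, Finset.Nat.sum_antidiagonal_eq_sum_range_succ_mk, coeff_X]
  split_ifs <;> ring

theorem sum_range_mul_eq_sum_Ico {w : ℕ → R} (hw : w 0 = 0) (k : ℕ) :
    ∑ i ∈ Finset.range (k + 1), w i * w (k - i) = ∑ i ∈ Finset.Ico 1 k, w i * w (k - i) := by
  rcases k with _ | k
  · simp [hw]
  rw [Finset.range_eq_Ico, Finset.sum_Ico_succ_top (Nat.zero_le _),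
    Finset.sum_eq_sum_Ico_succ_bot (Nat.succ_pos k)]
  simp [hw]

theorem riccatiRecurrence_coeff {α β : R} {W : R⟦X⟧} (hW : riccati α β W = 0)
    (hW0 : constantCoeff W = 0) : RiccatiRecurrence α β (fun k => coeff k W) := by
  refine ⟨by simpa using hW0, fun k _ => ?_⟩
  have hk := congrArg (coeff k) hW
  rwa [coeff_riccati, map_zero, sum_range_mul_eq_sum_Ico (w := fun k => coeff k W)
    (by simpa using hW0)] at hk

variable {K : Type*} [Field K] {α β : K}

theorem RiccatiRecurrence.unique (hβ : ∀ k : ℕ, 1 ≤ k → (k : K) ≠ β) {c d : ℕ → K}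
    (hc : RiccatiRecurrence α β c) (hd : RiccatiRecurrence α β d) : c = d := by
  funext k
  induction k using Nat.strong_induction_on with
  | _ k ih =>
    rcases Nat.eq_zero_or_pos k with rfl | hk
    · rw [hc.1, hd.1]
    have hsum : ∑ i ∈ Finset.Ico 1 k, c i * c (k - i) = ∑ i ∈ Finset.Ico 1 k, d i * d (k - i) :=
      Finset.sum_congr rfl fun i hi => by
        rw [Finset.mem_Ico] at hi
        rw [ih i (by omega), ih (k - i) (by omega)]
    have hck := hc.2 k hk
    rw [hsum] at hck
    refine mul_left_cancel₀ (sub_ne_zero.2 (hβ k hk)) ?_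
    linear_combination hck - hd.2 k hk

theorem riccati_eq_zero_of_linear (hβ : β ≠ 0) {u W : K⟦X⟧} (hu : u ≠ 0)
    (hW : C β * W * u = X * d⁄dX K u)
    (hlin : X * d⁄dX K (d⁄dX K u) + C (1 - β) * d⁄dX K u + C (α * β) * u = 0) :
    riccati α β W = 0 := by
  have hW' : C β * (d⁄dX K W * u + W * d⁄dX K u) = d⁄dX K u + X * d⁄dX K (d⁄dX K u) := by
    have := congrArg (d⁄dX K) hW
    simp only [Derivation.leibniz, smul_eq_mul, derivative_C, derivative_X] at this
    linear_combination this
  simp only [map_sub, map_one, map_mul] at hlin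
  have key : C β * u ^ 2 * riccati α β W = 0 := by
    unfold riccati
    linear_combination (X * u) * hW' + (C β * u * (W - 1)) * hW + (X * u) * hlin
  refine (mul_eq_zero.1 key).resolve_left (mul_ne_zero ?_ (pow_ne_zero 2 hu))
  simpa using hβ

theorem RiccatiRecurrence.mk_mul_hypergeometric0F1 [CharZero K] {c : ℕ → K}
    (hc : RiccatiRecurrence α β c) (hβ : ∀ k : ℕ, (k : K) ≠ β) :
    mk c * hypergeometric0F1 (1 - β) (-(α * β)) =
      C (c 1) * X * hypergeometric0F1 (1 - β + 1) (-(α * β)) := by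
  set u := hypergeometric0F1 (1 - β) (-(α * β))
  set v := hypergeometric0F1 (1 - β + 1) (-(α * β))
  have hb := one_sub_add_natCast_ne_zero hβ
  have hβ0 : β ≠ 0 := by simpa using (hβ 0).symm
  have hβ1 : 1 - β ≠ 0 := by simpa using hb 0
  have hc1 : (1 - β) * c 1 + α = 0 := by simpa using hc.2 1 le_rfl
  have hu0 : constantCoeff u ≠ 0 := by simp [u, constantCoeff_hypergeometric0F1]
  have hdu : d⁄dX K u = C (β * c 1) * v := by
    rw [derivative_hypergeometric0F1 _ hb]
    congr 2
    rw [div_eq_iff hβ1]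
    linear_combination -β * hc1
  set W := C (c 1) * X * v * u⁻¹
  have hWu : W * u = C (c 1) * X * v := by
    rw [mul_assoc _ u⁻¹, PowerSeries.inv_mul_cancel _ hu0, mul_one]
  have hW : riccati α β W = 0 := by
    refine riccati_eq_zero_of_linear hβ0 (ne_zero_of_map hu0) ?_ ?_
    · rw [mul_assoc, hWu, hdu, map_mul]; ring
    · simpa only [map_neg, neg_mul, sub_neg_eq_add] using hypergeometric0F1_ode (-(α * β)) hb
  have hW0 : constantCoeff W = 0 := by simp [W]
  have hcW : c = fun k => coeff k W :=
    RiccatiRecurrence.unique (fun k _ => hβ k) hc (riccatiRecurrence_coeff hW hW0)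
  rw [← hWu, hcW]
  congr 1
  ext k
  simp

end Riccati

section Contraction

variable {R : Type*} [CommRing R] {G : ℕ → R⟦X⟧} {a : ℕ → R}

theorem evenContraction_error (hG : ∀ m, G m = G (m + 1) + C (a m) * X * G (m + 2))
    {F : R⟦X⟧} {s : R} (hF : F * G 0 = C s * X * G 1) {b c : ℕ → R}
    (hb : ∀ n, b n = a (2 * n + 1) + a (2 * n + 2)) (hc : ∀ n, c n = -(a (2 * n) * a (2 * n + 1)))
    {P Q : ℕ → R⟦X⟧} (hP0 : P 0 = 0) (hQ0 : Q 0 = 1) (hP1 : P 1 = C s * X)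
    (hQ1 : Q 1 = 1 + C (a 0) * X)
    (hP : ∀ n, P (n + 2) = (1 + C (b n) * X) * P (n + 1) + C (c n) * X ^ 2 * P n)
    (hQ : ∀ n, Q (n + 2) = (1 + C (b n) * X) * Q (n + 1) + C (c n) * X ^ 2 * Q n) (n : ℕ) :
    (Q n * F - P n) * G 0 =
      C (s * ∏ i ∈ Finset.range (2 * n), a i) * X ^ (2 * n + 1) * G (2 * n + 1) := by
  induction n using Nat.twoStepInduction with
  | zero => simp [hP0, hQ0, hF]
  | one =>
    simp only [hP1, hQ1, Finset.prod_range_succ, Finset.prod_range_zero, one_mul, map_mul]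
    linear_combination (1 + C (a 0) * X) * hF - C s * X * hG 0 + C s * C (a 0) * X ^ 2 * hG 1
  | more n ih0 ih1 =>
    have hσ1 : ∏ i ∈ Finset.range (2 * (n + 1)), a i =
        (∏ i ∈ Finset.range (2 * n), a i) * a (2 * n) * a (2 * n + 1) := by
      rw [show 2 * (n + 1) = 2 * n + 1 + 1 by ring, Finset.prod_range_succ, Finset.prod_range_succ]
    have hσ2 : ∏ i ∈ Finset.range (2 * (n + 2)), a i =
        (∏ i ∈ Finset.range (2 * n), a i) * a (2 * n) * a (2 * n + 1) * a (2 * n + 2)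
          * a (2 * n + 3) := by
      rw [show 2 * (n + 2) = 2 * n + 1 + 1 + 1 + 1 by ring]
      simp only [Finset.prod_range_succ]
    have hG1 : G (2 * n + 1) = G (2 * n + 2) + C (a (2 * n + 1)) * X * G (2 * n + 3) := hG _
    have hG2 : G (2 * n + 2) = G (2 * n + 3) + C (a (2 * n + 2)) * X * G (2 * n + 4) := hG _
    have hG3 : G (2 * n + 3) = G (2 * n + 4) + C (a (2 * n + 3)) * X * G (2 * n + 5) := hG _
    rw [hσ1, show 2 * (n + 1) + 1 = 2 * n + 3 by ring] at ih1
    rw [hσ2, show 2 * (n + 2) + 1 = 2 * n + 5 by ring, hP, hQ, hb, hc]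
    set σ := ∏ i ∈ Finset.range (2 * n), a i
    simp only [map_mul, map_add, map_neg] at ih0 ih1 ⊢
    linear_combination (1 + (C (a (2 * n + 1)) + C (a (2 * n + 2))) * X) * ih1
      - C (a (2 * n)) * C (a (2 * n + 1)) * X ^ 2 * ih0
      - C s * C σ * C (a (2 * n)) * C (a (2 * n + 1)) * X ^ (2 * n + 3) * (hG1 + hG2)
      + C s * C σ * C (a (2 * n)) * C (a (2 * n + 1)) * C (a (2 * n + 2)) * X ^ (2 * n + 4) * hG3

end Contraction

end PowerSeries

open scoped PowerSeries

section JacobiRecurrence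

variable {R : Type*} [CommRing R]

def IsJacobiRecurrence (b c : ℕ → R) (P : ℕ → R[X]) : Prop :=
  ∀ n, 2 ≤ n → P n = (1 + C (b n) * X) * P (n - 1) + C (c n) * X ^ 2 * P (n - 2)

variable {b c : ℕ → R} {P : ℕ → R[X]}

theorem IsJacobiRecurrence.add_two (hP : IsJacobiRecurrence b c P) (n : ℕ) :
    P (n + 2) = (1 + C (b (n + 2)) * X) * P (n + 1) + C (c (n + 2)) * X ^ 2 * P n := by
  simpa using hP (n + 2) le_add_self

theorem IsJacobiRecurrence.natDegree_le (hP : IsJacobiRecurrence b c P)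
    (h0 : (P 0).natDegree = 0) (h1 : (P 1).natDegree ≤ 1) (n : ℕ) : (P n).natDegree ≤ n := by
  induction n using Nat.twoStepInduction with
  | zero => exact h0.le
  | one => exact h1
  | more n ih0 ih1 =>
    rw [hP.add_two]
    have hb : (1 + C (b (n + 2)) * X).natDegree ≤ 1 := by compute_degree
    have hc : (C (c (n + 2)) * X ^ 2).natDegree ≤ 2 := by compute_degree
    exact natDegree_add_le_of_degree_le ((natDegree_mul_le_of_le hb ih1).trans (by omega))
      ((natDegree_mul_le_of_le hc ih0).trans (by omega))

theorem IsJacobiRecurrence.coeff_zero (hP : IsJacobiRecurrence b c P)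
    (h1 : (P 1).coeff 0 = (P 0).coeff 0) (n : ℕ) : (P n).coeff 0 = (P 0).coeff 0 := by
  induction n using Nat.twoStepInduction with
  | zero => rfl
  | one => exact h1
  | more n _ ih1 =>
    simpa [hP.add_two, mul_coeff_zero] using ih1

theorem IsJacobiRecurrence.coe (hP : IsJacobiRecurrence b c P) (n : ℕ) :
    (P (n + 2) : R⟦X⟧) = (1 + PowerSeries.C (b (n + 2)) * PowerSeries.X) * (P (n + 1) : R⟦X⟧)
      + PowerSeries.C (c (n + 2)) * PowerSeries.X ^ 2 * (P n : R⟦X⟧) := by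
  simp [hP.add_two]

end JacobiRecurrence

theorem seriesTrunc_eq_trunc (c : ℕ → ℝ) (N : ℕ) :
    seriesTrunc c N = PowerSeries.trunc (N + 1) (PowerSeries.mk c) := by
  ext j
  simp [seriesTrunc, PowerSeries.coeff_trunc, finsetSum_coeff]

theorem isPadePair_of_X_pow_dvd {c : ℕ → ℝ} {n : ℕ} {A B : ℝ[X]} (hA : A.natDegree ≤ n)
    (hB : B.natDegree ≤ n) (hA0 : A.coeff 0 = 0) (hB0 : B.coeff 0 = 1)
    (hdvd : PowerSeries.X ^ (2 * n + 1) ∣ (B : ℝ⟦X⟧) * PowerSeries.mk c - (A : ℝ⟦X⟧)) :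
    IsPadePair c n A B := by
  refine ⟨hA, hB, hA0, hB0, fun j hj => ?_⟩
  set N := 2 * n + 1
  have htail : PowerSeries.X ^ N ∣
      PowerSeries.mk c - (PowerSeries.trunc N (PowerSeries.mk c) : ℝ⟦X⟧) :=
    ⟨_, sub_eq_iff_eq_add.2 (PowerSeries.eq_X_pow_mul_shift_add_trunc N _)⟩
  have h : PowerSeries.X ^ N ∣ ((A - B * seriesTrunc c (2 * n) : ℝ[X]) : ℝ⟦X⟧) := by
    rw [seriesTrunc_eq_trunc]
    push_cast
    convert (dvd_mul_of_dvd_right htail (B : ℝ⟦X⟧)).sub hdvd using 1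
    ring
  rw [← Polynomial.coeff_coe]
  exact PowerSeries.X_pow_dvd_iff.1 h j (by omega)

noncomputable def riccatiStieltjesCoeff (α β : ℝ) (m : ℕ) : ℝ :=
  -(α * β) / ((1 - β + m) * (1 - β + m + 1))

theorem riccatiαn_add_two (α β : ℝ) (n : ℕ) :
    riccatiαn α β (n + 2) =
      -(riccatiStieltjesCoeff α β (2 * n) * riccatiStieltjesCoeff α β (2 * n + 1)) := by
  rw [riccatiαn, riccatiStieltjesCoeff, riccatiStieltjesCoeff, div_mul_div_comm, ← neg_div]
  congr 1 <;> push_cast <;> ring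

theorem riccatiβn_add_two {α β : ℝ} (hβ : ∀ k : ℕ, (k : ℝ) ≠ β) (n : ℕ) :
    riccatiβn α β (n + 2) =
      riccatiStieltjesCoeff α β (2 * n + 1) + riccatiStieltjesCoeff α β (2 * n + 2) := by
  have h2 : (2 * n + 2 : ℝ) - β ≠ 0 := by exact_mod_cast sub_ne_zero.2 (hβ (2 * n + 2))
  have h3 : (2 * n + 3 : ℝ) - β ≠ 0 := by exact_mod_cast sub_ne_zero.2 (hβ (2 * n + 3))
  have h4 : (2 * n + 4 : ℝ) - β ≠ 0 := by exact_mod_cast sub_ne_zero.2 (hβ (2 * n + 4))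
  calc riccatiβn α β (n + 2) = -(2 * α * β) / ((2 * n + 4 - β) * (2 * n + 2 - β)) := by
        rw [riccatiβn]; push_cast; ring
    _ = -(α * β) / ((2 * n + 2 - β) * (2 * n + 3 - β))
          + -(α * β) / ((2 * n + 3 - β) * (2 * n + 4 - β)) := by
        rw [div_add_div _ _ (mul_ne_zero h2 h3) (mul_ne_zero h3 h4), div_eq_div_iff
          (mul_ne_zero h4 h2) (mul_ne_zero (mul_ne_zero h2 h3) (mul_ne_zero h3 h4))]
        ring
    _ = _ := by rw [riccatiStieltjesCoeff, riccatiStieltjesCoeff]; push_cast; ring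

theorem PowerSeries.RiccatiRecurrence.coeff_two_div_coeff_one {α β : ℝ} {c : ℕ → ℝ}
    (hα : α ≠ 0) (hβ : ∀ k : ℕ, (k : ℝ) ≠ β) (hc : PowerSeries.RiccatiRecurrence α β c) :
    c 2 / c 1 = -riccatiStieltjesCoeff α β 0 := by
  have h1 : (1 - β) * c 1 + α = 0 := by simpa using hc.2 1 le_rfl
  have h2 : (2 - β) * c 2 + β * c 1 ^ 2 = 0 := by
    simpa [sq, show Finset.Ico 1 2 = {1} from rfl] using hc.2 2 one_le_two
  have hβ1 : 1 - β ≠ 0 := sub_ne_zero.2 (by exact_mod_cast hβ 1)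
  have hβ2 : 1 - β + 1 ≠ 0 := fun h => hβ 2 (by push_cast; linarith)
  have hc1 : c 1 ≠ 0 := fun h => hα (by simpa [h] using h1)
  rw [riccatiStieltjesCoeff, Nat.cast_zero, add_zero, div_eq_iff hc1]
  field_simp
  linear_combination (1 - β) * h2 - β * c 1 * h1

/-- **Explicit Jacobi parameters for the Riccati equation (the paper's Algorithm 2)**:
with `c` the Taylor coefficients of the Riccati solution, the polynomials generated by
the Jacobi recursion with the explicit parameters `α_n`, `β_n` form `[n/n]` Padé pairs
for every `n ≥ 1`. -/
theorem riccati_jacobi_algorithm (α β : ℝ) (hα : α ≠ 0) (hβ : ∀ k : ℤ, β ≠ (k : ℝ))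
    (c : ℕ → ℝ) (hc0 : c 0 = 0)
    (hc : ∀ k : ℕ, 1 ≤ k →
      ((k : ℝ) - β) * c k + β * (∑ i ∈ Finset.Ico 1 k, c i * c (k - i))
        + (if k = 1 then α else 0) = 0)
    (A B : ℕ → Polynomial ℝ)
    (hA0 : A 0 = 0) (hB0 : B 0 = 1)
    (hA1 : A 1 = Polynomial.C (c 1) * Polynomial.X)
    (hB1 : B 1 = 1 - Polynomial.C (c 2 / c 1) * Polynomial.X)
    (hArec : ∀ n : ℕ, 2 ≤ n →
      A n = (1 + Polynomial.C (riccatiβn α β n) * Polynomial.X) * A (n - 1)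
        + Polynomial.C (riccatiαn α β n) * Polynomial.X ^ 2 * A (n - 2))
    (hBrec : ∀ n : ℕ, 2 ≤ n →
      B n = (1 + Polynomial.C (riccatiβn α β n) * Polynomial.X) * B (n - 1)
        + Polynomial.C (riccatiαn α β n) * Polynomial.X ^ 2 * B (n - 2)) :
    ∀ n : ℕ, 1 ≤ n → IsPadePair c n (A n) (B n) := by
  have hβℕ : ∀ k : ℕ, (k : ℝ) ≠ β := fun k h => hβ k (by exact_mod_cast h.symm)
  have hb := one_sub_add_natCast_ne_zero hβℕ
  have hrec : PowerSeries.RiccatiRecurrence α β c := ⟨hc0, hc⟩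
  set G : ℕ → ℝ⟦X⟧ := fun m => PowerSeries.hypergeometric0F1 (1 - β + m) (-(α * β))
  have hG (m : ℕ) : G m = G (m + 1)
      + PowerSeries.C (riccatiStieltjesCoeff α β m) * PowerSeries.X * G (m + 2) := by
    simpa [G, riccatiStieltjesCoeff, add_assoc, one_add_one_eq_two] using
      PowerSeries.hypergeometric0F1_contiguous (-(α * β)) (add_add_natCast_ne_zero hb m)
  have hF : PowerSeries.mk c * G 0 = PowerSeries.C (c 1) * PowerSeries.X * G 1 := by
    simpa [G] using hrec.mk_mul_hypergeometric0F1 hβℕ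
  have herr := PowerSeries.evenContraction_error hG hF (riccatiβn_add_two hβℕ)
    (riccatiαn_add_two α β) (P := fun n => (A n : ℝ⟦X⟧)) (Q := fun n => (B n : ℝ⟦X⟧))
    (by simp [hA0]) (by simp [hB0]) (by simp [hA1])
    (by simp [hB1, hrec.coeff_two_div_coeff_one hα hβℕ, sub_eq_add_neg])
    (IsJacobiRecurrence.coe hArec) (IsJacobiRecurrence.coe hBrec)
  intro n _
  refine isPadePair_of_X_pow_dvd
    (IsJacobiRecurrence.natDegree_le hArec (by simp [hA0]) (by rw [hA1]; compute_degree) n)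
    (IsJacobiRecurrence.natDegree_le hBrec (by simp [hB0]) (by rw [hB1]; compute_degree) n)
    (by simpa [hA0, hA1] using IsJacobiRecurrence.coeff_zero hArec (by simp [hA0, hA1]) n)
    (by simpa [hB0, hB1] using IsJacobiRecurrence.coeff_zero hBrec (by simp [hB0, hB1]) n) ?_
  have hG0 : IsUnit (G 0) := by
    simp [G, PowerSeries.isUnit_iff_constantCoeff, PowerSeries.constantCoeff_hypergeometric0F1]
  rw [← hG0.dvd_mul_right, herr n]
  exact dvd_mul_of_dvd_left (dvd_mul_left _ _) _
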